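/- (Corollary 2.11) Let c ∈ ℂ, let κ ∈ ℂ with κ ∉ {0, −1, −2, …}, and let M > 0. If f ∈ 𝒜 satisfies |B_κ^c f(z)/z − B_{κ+1}^c f(z)/z| < M/|κ| for all z ∈ 𝕌, then |B_{κ+1}^c f(z)/z − 1| < M for all z ∈ 𝕌, where each quotient B_μ^c f(z)/z is understood as its analytic extension to 𝕌 with value 1 at z = 0. -/

import Mathlib

open Complex Metric Set

noncomputable section

/-- The open unit disk 𝕌. -/
def unitDisk : Set ℂ := Metric.ball (0 : ℂ) 1

/-- The class 𝒜 of normalized analytic functions on 𝕌. -/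
def InA (f : ℂ → ℂ) : Prop :=
  DifferentiableOn ℂ f unitDisk ∧ f 0 = 0 ∧ deriv f 0 = 1

/-- ℋ_0 : analytic on 𝕌 with value 0 at the origin. -/
def InH0 (q : ℂ → ℂ) : Prop := DifferentiableOn ℂ q unitDisk ∧ q 0 = 0

/-- ℋ_1 : analytic on 𝕌 with value 1 at the origin. -/
def InH1 (q : ℂ → ℂ) : Prop := DifferentiableOn ℂ q unitDisk ∧ q 0 = 1

/-- Univalent (analytic and injective) on 𝕌. -/
def Univalent (h : ℂ → ℂ) : Prop :=
  DifferentiableOn ℂ h unitDisk ∧ Set.InjOn h unitDisk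

/-- The coefficient (−c)^n / (4^n (κ)_n n!). -/
def besselCoeff (c κ : ℂ) (n : ℕ) : ℂ :=
  (-c) ^ n / ((4 : ℂ) ^ n * (ascPochhammer ℂ n).eval κ * (n.factorial : ℂ))

/-- The n-th Taylor coefficient of f at 0. -/
def taylorCoeff (f : ℂ → ℂ) (n : ℕ) : ℂ := iteratedDeriv n f 0 / (n.factorial : ℂ)

/-- φ_{κ,c} : the normalized generalized Bessel function of the first kind. -/
def genBessel (κ c : ℂ) (z : ℂ) : ℂ := ∑' n : ℕ, besselCoeff c κ n * z ^ (n + 1)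

/-- The operator B_κ^c, the Hadamard product of φ_{κ,c} with f. -/
def besselOp (c κ : ℂ) (f : ℂ → ℂ) (z : ℂ) : ℂ :=
  ∑' n : ℕ, besselCoeff c κ n * taylorCoeff f (n + 1) * z ^ (n + 1)

/-- Subordination f ≺ F on the unit disk. -/
def Subordinate (f F : ℂ → ℂ) : Prop :=
  ∃ w : ℂ → ℂ, DifferentiableOn ℂ w unitDisk ∧ w 0 = 0 ∧
    Set.MapsTo w unitDisk unitDisk ∧ ∀ z ∈ unitDisk, f z = F (w z)

/-- E(q) : boundary points where q blows up. -/
def Eset (q : ℂ → ℂ) : Set ℂ :=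
  {ζ | ζ ∈ Metric.sphere (0 : ℂ) 1 ∧
    Filter.Tendsto q (nhdsWithin ζ unitDisk) (Bornology.cobounded ℂ)}

/-- The class 𝒬. -/
def InQ (q : ℂ → ℂ) : Prop :=
  AnalyticOnNhd ℂ q (Metric.closedBall (0 : ℂ) 1 \ Eset q) ∧
  Set.InjOn q (Metric.closedBall (0 : ℂ) 1 \ Eset q) ∧
  ∀ ζ ∈ Metric.sphere (0 : ℂ) 1 \ Eset q, deriv q ζ ≠ 0

def InQ0 (q : ℂ → ℂ) : Prop := InQ q ∧ q 0 = 0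

def InQ1 (q : ℂ → ℂ) : Prop := InQ q ∧ q 0 = 1

/-- The admissibility class Φ_H[Ω,q] (Definition 2.1), with parameter κ. -/
def PhiH (κ : ℂ) (Ω : Set ℂ) (q : ℂ → ℂ) (φ : ℂ → ℂ → ℂ → ℂ → ℂ) : Prop :=
  ∀ z ∈ unitDisk, ∀ ζ ∈ Metric.sphere (0 : ℂ) 1 \ Eset q, ∀ k : ℝ, 1 ≤ k →
    ∀ u v w : ℂ, u = q ζ →
      v = ((k : ℂ) * ζ * deriv q ζ + (κ - 1) * q ζ) / κ →
      ((κ * (κ - 1) * w - (κ - 2) * (κ - 1) * u) / (κ * v - (κ - 1) * u) -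
          (2 * κ - 3)).re ≥ k * (ζ * deriv (deriv q) ζ / deriv q ζ + 1).re →
      φ u v w z ∉ Ω

/-- The admissibility class Φ_{H,1}[Ω,q] (Definition 2.3), with parameter κ. -/
def PhiH1 (κ : ℂ) (Ω : Set ℂ) (q : ℂ → ℂ) (φ : ℂ → ℂ → ℂ → ℂ → ℂ) : Prop :=
  ∀ z ∈ unitDisk, ∀ ζ ∈ Metric.sphere (0 : ℂ) 1 \ Eset q, q ζ ≠ 0 → ∀ k : ℝ, 1 ≤ k →
    ∀ u v w : ℂ, u = q ζ →
      v = (1 / (κ - 1)) * ((k : ℂ) * ζ * deriv q ζ / q ζ + κ * q ζ - 1) →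
      ((κ - 1) * v * ((κ - 1) * (w - v) + 1 - w) / ((κ - 1) * v + 1 - κ * u) -
          (2 * κ * u - 1 - (κ - 1) * v)).re ≥
        k * (ζ * deriv (deriv q) ζ / deriv q ζ + 1).re →
      φ u v w z ∉ Ω

/-- The admissibility class Φ_{H,2}[Ω,q] (Definition 2.5), with parameter κ. -/
def PhiH2 (κ : ℂ) (Ω : Set ℂ) (q : ℂ → ℂ) (φ : ℂ → ℂ → ℂ → ℂ → ℂ) : Prop :=
  ∀ z ∈ unitDisk, ∀ ζ ∈ Metric.sphere (0 : ℂ) 1 \ Eset q, ∀ k : ℝ, 1 ≤ k →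
    ∀ u v w : ℂ, u = q ζ →
      v = ((k : ℂ) * ζ * deriv q ζ + κ * q ζ) / κ →
      ((κ - 1) * (w - u) / (v - u) + (1 - 2 * κ)).re ≥
        k * (ζ * deriv (deriv q) ζ / deriv q ζ + 1).re →
      φ u v w z ∉ Ω

/-- The admissibility class Φ_H[Ω,M] (Definition 2.2), with parameter κ. -/
def PhiHM (κ : ℂ) (Ω : Set ℂ) (M : ℝ) (φ : ℂ → ℂ → ℂ → ℂ → ℂ) : Prop :=
  ∀ z ∈ unitDisk, ∀ θ : ℝ, ∀ k : ℝ, 1 ≤ k → ∀ L : ℂ,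
    (L * Complex.exp (-(θ : ℂ) * Complex.I)).re ≥ (k - 1) * k * M →
    φ ((M : ℂ) * Complex.exp ((θ : ℂ) * Complex.I))
      (((k : ℂ) + κ - 1) / κ * (M : ℂ) * Complex.exp ((θ : ℂ) * Complex.I))
      ((L + (κ - 1) * (2 * (k : ℂ) + κ - 2) * (M : ℂ) * Complex.exp ((θ : ℂ) * Complex.I)) /
        (κ * (κ - 1))) z ∉ Ω

/-- The admissibility class Φ′_H[Ω,q] (Definition 3.1), with parameter κ. -/
def PhiH' (κ : ℂ) (Ω : Set ℂ) (q : ℂ → ℂ) (φ : ℂ → ℂ → ℂ → ℂ → ℂ) : Prop :=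
  ∀ z ∈ unitDisk, ∀ ς ∈ Metric.sphere (0 : ℂ) 1, ∀ m : ℝ, 1 ≤ m →
    ∀ u v w : ℂ, u = q z →
      v = (z * deriv q z + (m : ℂ) * (κ - 1) * q z) / ((m : ℂ) * κ) →
      ((κ * (κ - 1) * w - (κ - 2) * (κ - 1) * u) / (κ * v - (κ - 1) * u) -
          (2 * κ - 3)).re ≤ (1 / m) * (z * deriv (deriv q) z / deriv q z + 1).re →
      φ u v w ς ∈ Ω

/-- The quotient g/h extended analytically with value 1 at the origin. -/
def ratio (g h : ℂ → ℂ) (z : ℂ) : ℂ := if z = 0 then 1 else g z / h z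

/-- The quotient g(z)/z extended analytically with value 1 at the origin. -/
def divZ (g : ℂ → ℂ) (z : ℂ) : ℂ := if z = 0 then 1 else g z / z

/-- z ↦ φ(B_{κ+1}^c f(z), B_κ^c f(z), B_{κ−1}^c f(z); z). -/
def opPhi (c κ : ℂ) (φ : ℂ → ℂ → ℂ → ℂ → ℂ) (f : ℂ → ℂ) (z : ℂ) : ℂ :=
  φ (besselOp c (κ + 1) f z) (besselOp c κ f z) (besselOp c (κ - 1) f z) z


/-
Write `p` for the analytic extension of `B_{κ+1}^c f(z)/z` and `q` for that of `B_κ^c f(z)/z`,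
with Taylor coefficients `a_n` and `b_n`. The Pochhammer recursion gives `κ b_n = (κ + n) a_n`,
that is `κ (q - p) = z p'`, so the hypothesis says `‖z p'(z)‖ < M` on the disk. The Schwarz lemma
applied to `z p'(z)`, which vanishes at the origin, gives `‖z p'(z)‖ ≤ M ‖z‖`, hence `‖p'‖ ≤ M`,
and the mean value inequality yields `‖p(z) - 1‖ ≤ M ‖z‖ < M`.
-/

section SchwarzBound

variable {g : ℂ → ℂ} {M : ℝ}

theorem norm_deriv_le_of_norm_mul_deriv_le (hg : DifferentiableOn ℂ g unitDisk)
    (hM : ∀ z ∈ unitDisk, ‖z * deriv g z‖ ≤ M) {z : ℂ} (hz : z ∈ unitDisk) :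
    ‖deriv g z‖ ≤ M := by
  set G : ℂ → ℂ := fun w => w * deriv g w
  have hg' : DifferentiableOn ℂ (deriv g) unitDisk := hg.deriv isOpen_ball
  have hG : DifferentiableOn ℂ G (ball 0 1) := differentiableOn_id.mul hg'
  have hmaps : MapsTo G (ball 0 1) (closedBall (G 0) M) := fun w hw => by
    simpa [G] using hM w hw
  have hdslope : dslope G 0 z = deriv g z := by
    rcases eq_or_ne z 0 with rfl | hz0
    · have hderiv : HasDerivAt G (1 * deriv g 0 + 0 * deriv (deriv g) 0) 0 :=
        (hasDerivAt_id' 0).mul (hg'.differentiableAt (isOpen_ball.mem_nhds hz)).hasDerivAt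
      simpa using hderiv.deriv
    · rw [dslope_of_ne _ hz0, slope_def_field]
      simp only [zero_mul, sub_zero, G]
      field_simp
  simpa [hdslope] using Complex.norm_dslope_le_div_of_mapsTo_ball hG hmaps hz

theorem norm_sub_le_of_norm_mul_deriv_le (hg : DifferentiableOn ℂ g unitDisk)
    (hM : ∀ z ∈ unitDisk, ‖z * deriv g z‖ ≤ M) {z : ℂ} (hz : z ∈ unitDisk) :
    ‖g z - g 0‖ ≤ M * ‖z‖ := by
  simpa using (convex_ball (0 : ℂ) 1).norm_image_sub_le_of_norm_deriv_le
    (fun w hw => hg.differentiableAt (isOpen_ball.mem_nhds hw))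
    (fun w hw => norm_deriv_le_of_norm_mul_deriv_le hg hM hw) (mem_ball_self one_pos) hz

end SchwarzBound

section PowerSeries

variable {a : ℕ → ℂ} {r : ℝ} {z : ℂ}

theorem norm_mul_pow_le_of_mem_ball (hz : z ∈ ball (0 : ℂ) r) (n : ℕ) :
    ‖a n * z ^ n‖ ≤ ‖a n‖ * r ^ n := by
  rw [norm_mul, norm_pow]
  gcongr
  exact (mem_ball_zero_iff.1 hz).le

theorem summable_mul_pow_of_mem_ball (ha : Summable fun n => ‖a n‖ * r ^ n)
    (hz : z ∈ ball (0 : ℂ) r) : Summable fun n => a n * z ^ n :=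
  ha.of_norm_bounded (norm_mul_pow_le_of_mem_ball hz)

theorem differentiableOn_tsum_mul_pow (ha : Summable fun n => ‖a n‖ * r ^ n) :
    DifferentiableOn ℂ (fun w => ∑' n, a n * w ^ n) (ball 0 r) :=
  Complex.differentiableOn_tsum_of_summable_norm ha (fun n => by fun_prop) isOpen_ball
    (fun _ _ hw => norm_mul_pow_le_of_mem_ball hw _)

theorem hasSum_mul_deriv_tsum_mul_pow (ha : Summable fun n => ‖a n‖ * r ^ n)
    (hz : z ∈ ball (0 : ℂ) r) :
    HasSum (fun n => n * a n * z ^ n) (z * deriv (fun w => ∑' n, a n * w ^ n) z) := by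
  have hderiv := (Complex.hasSum_deriv_of_summable_norm ha
    (fun n => (differentiable_const _).mul (differentiable_pow n) |>.differentiableOn)
    isOpen_ball (fun _ _ hw => norm_mul_pow_le_of_mem_ball hw _) hz).mul_left z
  refine hderiv.congr_fun fun n => ?_
  simp only [deriv_const_mul_field', deriv_pow_field]
  rcases n with _ | n
  · simp
  · simp only [Nat.add_sub_cancel, pow_succ]
    push_cast
    ring

end PowerSeries

section BesselCoeff

variable (c : ℂ) {κ : ℂ}

@[simp]
theorem besselCoeff_zero (κ : ℂ) : besselCoeff c κ 0 = 1 := by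
  simp [besselCoeff]

theorem besselCoeff_succ (κ : ℂ) (n : ℕ) :
    besselCoeff c κ (n + 1) = besselCoeff c κ n * (-c / (4 * (κ + n) * (n + 1))) := by
  rw [besselCoeff, besselCoeff, ascPochhammer_succ_eval, Nat.factorial_succ, div_mul_div_comm]
  push_cast
  congr 1
  ring

theorem mul_besselCoeff (hκ : ∀ n : ℕ, κ ≠ -(n : ℂ)) (n : ℕ) :
    κ * besselCoeff c κ n = (κ + n) * besselCoeff c (κ + 1) n := by
  induction n with
  | zero => simp
  | succ n ih =>
    have h₁ : κ + n ≠ 0 := fun h => hκ n (eq_neg_of_add_eq_zero_left h)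
    have h₂ : κ + 1 + n ≠ 0 := fun h => hκ (n + 1) (by push_cast; linear_combination h)
    rw [besselCoeff_succ, besselCoeff_succ, ← mul_assoc, ih]
    field_simp
    push_cast
    ring

theorem summable_norm_besselCoeff (κ : ℂ) : Summable fun n => ‖besselCoeff c κ n‖ := by
  refine Summable.norm (summable_of_ratio_norm_eventually_le (f := besselCoeff c κ) (r := 1 / 2)
    (by norm_num) ?_)
  filter_upwards [tendsto_natCast_atTop_atTop.eventually_ge_atTop (‖κ‖ + 1),
    tendsto_natCast_atTop_atTop.eventually_ge_atTop ‖c‖] with n hnκ hnc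
  have hκn : 1 ≤ ‖κ + n‖ := by
    have := norm_sub_norm_le (n : ℂ) (-κ)
    rw [Complex.norm_natCast, norm_neg, sub_neg_eq_add, add_comm] at this
    linarith
  have hden : ‖4 * (κ + n) * ((n : ℂ) + 1)‖ = 4 * ‖κ + n‖ * (n + 1) := by
    rw [norm_mul, norm_mul, ← Nat.cast_add_one, Complex.norm_natCast]
    norm_num
  rw [besselCoeff_succ, norm_mul, mul_comm, norm_div, norm_neg, hden]
  refine mul_le_mul_of_nonneg_right ?_ (norm_nonneg _)
  rw [div_le_iff₀ (mul_pos (mul_pos four_pos (one_pos.trans_le hκn)) n.cast_add_one_pos)]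
  nlinarith

end BesselCoeff

theorem exists_norm_taylorCoeff_mul_pow_le {f : ℂ → ℂ} (hf : DifferentiableOn ℂ f unitDisk)
    {r : ℝ} (hr₀ : 0 ≤ r) (hr₁ : r < 1) : ∃ C, ∀ n, ‖taylorCoeff f n‖ * r ^ n ≤ C := by
  have hr : (r : ℂ) ∈ ball (0 : ℂ) 1 := by
    simpa [abs_of_nonneg hr₀] using hr₁
  obtain ⟨C, hC⟩ :=
    (Complex.hasSum_taylorSeries_on_ball hf hr).summable.tendsto_atTop_zero.norm.bddAbove_range
  refine ⟨C, fun n => le_trans (le_of_eq ?_) (hC ⟨n, rfl⟩)⟩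
  simp only [taylorCoeff, div_eq_inv_mul, norm_mul, norm_inv, RCLike.norm_natCast, sub_zero,
    smul_eq_mul, norm_pow, norm_real, Real.norm_eq_abs, abs_of_nonneg hr₀]
  ring

def besselOpCoeff (c κ : ℂ) (f : ℂ → ℂ) (n : ℕ) : ℂ := besselCoeff c κ n * taylorCoeff f (n + 1)

section BesselOp

variable (c : ℂ) {κ : ℂ} {f : ℂ → ℂ}

theorem divZ_besselOp (hf₁ : deriv f 0 = 1) (κ : ℂ) :
    divZ (besselOp c κ f) = fun z => ∑' n, besselOpCoeff c κ f n * z ^ n := by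
  funext z
  rcases eq_or_ne z 0 with rfl | hz
  · rw [divZ, if_pos rfl, tsum_eq_single 0 fun n hn => by simp [hn]]
    simp [besselOpCoeff, taylorCoeff, hf₁]
  · rw [divZ, if_neg hz, besselOp, div_eq_iff hz, ← tsum_mul_right]
    exact tsum_congr fun n => by rw [besselOpCoeff, pow_succ]; ring

theorem mul_sub_besselOpCoeff (hκ : ∀ n : ℕ, κ ≠ -(n : ℂ)) (n : ℕ) :
    κ * (besselOpCoeff c κ f n - besselOpCoeff c (κ + 1) f n) =
      n * besselOpCoeff c (κ + 1) f n := by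
  simp only [besselOpCoeff]
  linear_combination taylorCoeff f (n + 1) * mul_besselCoeff c hκ n

theorem summable_norm_besselOpCoeff_mul_pow (κ : ℂ) (hf : DifferentiableOn ℂ f unitDisk)
    {r : ℝ} (hr₀ : 0 < r) (hr₁ : r < 1) : Summable fun n => ‖besselOpCoeff c κ f n‖ * r ^ n := by
  obtain ⟨C, hC⟩ := exists_norm_taylorCoeff_mul_pow_le hf hr₀.le hr₁
  refine .of_nonneg_of_le (fun n => by positivity) (fun n => ?_)
    ((summable_norm_besselCoeff c κ).mul_right (C / r))
  calc ‖besselOpCoeff c κ f n‖ * r ^ n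
      = ‖besselCoeff c κ n‖ * (‖taylorCoeff f (n + 1)‖ * r ^ (n + 1)) / r := by
        rw [besselOpCoeff, norm_mul, pow_succ]
        field_simp
    _ ≤ ‖besselCoeff c κ n‖ * C / r := by gcongr; exact hC _
    _ = ‖besselCoeff c κ n‖ * (C / r) := by ring

theorem differentiableOn_divZ_besselOp (κ : ℂ) (hf : DifferentiableOn ℂ f unitDisk)
    (hf₁ : deriv f 0 = 1) : DifferentiableOn ℂ (divZ (besselOp c κ f)) unitDisk := by
  intro z hz
  obtain ⟨r, hzr, hr₁⟩ := exists_between (mem_ball_zero_iff.1 hz)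
  rw [divZ_besselOp c hf₁]
  have hdiff := differentiableOn_tsum_mul_pow
    (summable_norm_besselOpCoeff_mul_pow c κ hf ((norm_nonneg z).trans_lt hzr) hr₁)
  exact (hdiff.differentiableAt (isOpen_ball.mem_nhds (mem_ball_zero_iff.2 hzr)))
    |>.differentiableWithinAt

theorem mul_deriv_divZ_besselOp (hκ : ∀ n : ℕ, κ ≠ -(n : ℂ)) (hf : DifferentiableOn ℂ f unitDisk)
    (hf₁ : deriv f 0 = 1) {z : ℂ} (hz : z ∈ unitDisk) :
    z * deriv (divZ (besselOp c (κ + 1) f)) z =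
      κ * (divZ (besselOp c κ f) z - divZ (besselOp c (κ + 1) f) z) := by
  obtain ⟨r, hzr, hr₁⟩ := exists_between (mem_ball_zero_iff.1 hz)
  have hr₀ : 0 < r := (norm_nonneg z).trans_lt hzr
  have hzr' : z ∈ ball (0 : ℂ) r := mem_ball_zero_iff.2 hzr
  have hA := summable_norm_besselOpCoeff_mul_pow c (κ + 1) hf hr₀ hr₁
  have hB := summable_norm_besselOpCoeff_mul_pow c κ hf hr₀ hr₁
  have hsub := ((summable_mul_pow_of_mem_ball hB hzr').hasSum.sub
    (summable_mul_pow_of_mem_ball hA hzr').hasSum).mul_left κ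
  rw [divZ_besselOp c hf₁, divZ_besselOp c hf₁]
  refine (hasSum_mul_deriv_tsum_mul_pow hA hzr').unique (hsub.congr_fun fun n => ?_)
  rw [← sub_mul, ← mul_assoc, mul_sub_besselOpCoeff c hκ]

end BesselOp

/-- Corollary 2.11. -/
theorem corollary_2_11 (c κ : ℂ) (hκ : ∀ n : ℕ, κ ≠ -(n : ℂ))
    (M : ℝ) (hM : 0 < M) (f : ℂ → ℂ) (hf : InA f)
    (h : ∀ z ∈ unitDisk,
      ‖divZ (besselOp c κ f) z - divZ (besselOp c (κ + 1) f) z‖ < M / ‖κ‖) :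
    ∀ z ∈ unitDisk, ‖divZ (besselOp c (κ + 1) f) z - 1‖ < M := by
  obtain ⟨hfd, -, hf₁⟩ := hf
  have hκ₀ : 0 < ‖κ‖ := norm_pos_iff.2 (by simpa using hκ 0)
  have hbound : ∀ z ∈ unitDisk, ‖z * deriv (divZ (besselOp c (κ + 1) f)) z‖ ≤ M := by
    intro z hz
    rw [mul_deriv_divZ_besselOp c hκ hfd hf₁ hz, norm_mul]
    exact ((lt_div_iff₀' hκ₀).1 (h z hz)).le
  intro z hz
  calc ‖divZ (besselOp c (κ + 1) f) z - 1‖ ≤ M * ‖z‖ := by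
        simpa [divZ] using norm_sub_le_of_norm_mul_deriv_le
          (differentiableOn_divZ_besselOp c (κ + 1) hfd hf₁) hbound hz
    _ < M := mul_lt_of_lt_one_right hM (mem_ball_zero_iff.1 hz)
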